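/- arXiv:2406.10354 — 2 statements merged into one kernel-verified Lean document; each statement's English description precedes it below -/
import Mathlib

section
/- For a smooth path x : [0,1] → ℝ^d and any two words e_{i_1...i_r} and e_{j_1...j_s}, the signature satisfies the shuffle identity: ⟨e_{i_1...i_r} ⧢ e_{j_1...j_s}, S(x)⟩ = ⟨e_{i_1...i_r}, S(x)⟩ · ⟨e_{j_1...j_s}, S(x)⟩, where ⧢ denotes the shuffle product. -/
open MeasureTheory intervalIntegral Real Finset

/-- Shuffle product of two words, as the list of all interleavings (with multiplicity). -/
def shuffle {α : Type*} : List α → List α → List (List α)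
  | [], ys => [ys]
  | x :: xs, [] => [x :: xs]
  | x :: xs, y :: ys =>
      (shuffle xs (y :: ys)).map (x :: ·) ++ (shuffle (x :: xs) ys).map (y :: ·)
termination_by u v => u.length + v.length

/-- Iterated integral where the word is given in reverse order (last letter first). -/
noncomputable def sigRev {d : ℕ} (x : ℝ → Fin d → ℝ) (a : ℝ) : List (Fin d) → ℝ → ℝ
  | [] => fun _ => 1
  | i :: w => fun t => ∫ s in a..t, sigRev x a w s * deriv (fun u => x u i) s

/-- Signature coefficient `⟨e_w, S(x)_{a,b}⟩` of the path `x` over `[a,b]`. -/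
noncomputable def sigCoeff {d : ℕ} (x : ℝ → Fin d → ℝ) (a b : ℝ) (w : List (Fin d)) : ℝ :=
  sigRev x a w.reverse b

theorem test {d : ℕ} (x : ℝ → Fin d → ℝ) : sigCoeff x 0 1 [] = 1 := rfl

section Comb
variable {α : Type*}

lemma shuffle_nil_left (v : List α) : shuffle [] v = [v] := by simp [shuffle]

lemma shuffle_nil_right (u : List α) : shuffle u [] = [u] := by
  cases u <;> simp [shuffle]

lemma shuffle_cons_cons (x y : α) (xs ys : List α) :
    shuffle (x :: xs) (y :: ys)
      = (shuffle xs (y :: ys)).map (x :: ·) ++ (shuffle (x :: xs) ys).map (y :: ·) := by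
  simp [shuffle]

lemma shuffle_concat (a b : α) : ∀ p q : List α,
    (↑(shuffle (p ++ [a]) (q ++ [b])) : Multiset (List α))
      = ↑((shuffle p (q ++ [b])).map (· ++ [a])) + ↑((shuffle (p ++ [a]) q).map (· ++ [b]))
  | [], [] => by
    simp only [List.nil_append, List.cons_append, List.map_append, List.map_map, List.map_cons, List.map_nil, shuffle_cons_cons, shuffle_nil_left, shuffle_nil_right, ← Multiset.coe_add, ← Multiset.map_coe, ← Multiset.cons_coe, ← Multiset.singleton_add, Multiset.coe_singleton]
    abel
  | [], y :: q => by
    have ih := shuffle_concat a b [] q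
    simp only [List.nil_append, List.cons_append, List.map_append, List.map_map, List.map_cons, List.map_nil, shuffle_cons_cons, shuffle_nil_left, shuffle_nil_right, ← Multiset.coe_add, ← Multiset.map_coe, ← Multiset.cons_coe, ← Multiset.singleton_add, Multiset.coe_singleton] at ih ⊢
    rw [ih]
    simp only [Multiset.map_add, Multiset.map_map, Function.comp_def, List.cons_append, Multiset.map_singleton, Multiset.coe_singleton, ← Multiset.singleton_add]
    abel
  | x :: p, [] => by
    have ih := shuffle_concat a b p []
    simp only [List.nil_append, List.cons_append, List.map_append, List.map_map, List.map_cons, List.map_nil, shuffle_cons_cons, shuffle_nil_left, shuffle_nil_right, ← Multiset.coe_add, ← Multiset.map_coe, ← Multiset.cons_coe, ← Multiset.singleton_add, Multiset.coe_singleton] at ih ⊢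
    rw [ih]
    simp only [Multiset.map_add, Multiset.map_map, Function.comp_def, List.cons_append, Multiset.map_singleton, Multiset.coe_singleton, ← Multiset.singleton_add]
    abel
  | x :: p, y :: q => by
    have ih1 := shuffle_concat a b p (y :: q)
    have ih2 := shuffle_concat a b (x :: p) q
    simp only [List.nil_append, List.cons_append, List.map_append, List.map_map, List.map_cons, List.map_nil, shuffle_cons_cons, shuffle_nil_left, shuffle_nil_right, ← Multiset.coe_add, ← Multiset.map_coe, ← Multiset.cons_coe, ← Multiset.singleton_add, Multiset.coe_singleton] at ih1 ih2 ⊢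
    rw [ih1, ih2]
    simp only [Multiset.map_add, Multiset.map_map, Function.comp_def, List.cons_append, Multiset.map_singleton, Multiset.coe_singleton, ← Multiset.singleton_add]
    abel
termination_by p q => p.length + q.length

lemma shuffle_reverse : ∀ u v : List α,
    (↑((shuffle u v).map List.reverse) : Multiset (List α))
      = ↑(shuffle u.reverse v.reverse)
  | [], v => by simp [shuffle_nil_left]
  | x :: u, [] => by simp [shuffle_nil_left, shuffle_nil_right]
  | x :: u, y :: v => by
    have ih1 := shuffle_reverse u (y :: v)
    have ih2 := shuffle_reverse (x :: u) v
    rw [shuffle_cons_cons]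
    have hc := shuffle_concat x y u.reverse v.reverse
    simp only [List.reverse_cons] at *
    simp only [List.nil_append, List.cons_append, List.map_append, List.map_map, List.map_cons, List.map_nil, shuffle_cons_cons, shuffle_nil_left, shuffle_nil_right, ← Multiset.coe_add, ← Multiset.map_coe, ← Multiset.cons_coe, ← Multiset.singleton_add, Multiset.coe_singleton] at *
    rw [hc, ← ih1, ← ih2]
    simp only [Multiset.map_add, Multiset.map_map, Function.comp_def, List.cons_append, Multiset.map_singleton, Multiset.coe_singleton, ← Multiset.singleton_add, List.reverse_cons]
termination_by u v => u.length + v.length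

end Comb

section Anal
variable {d : ℕ} {x : ℝ → Fin d → ℝ} {a : ℝ}

lemma sigRev_continuous (hx : ∀ i : Fin d, Continuous (deriv fun t => x t i)) :
    ∀ w : List (Fin d), Continuous (sigRev x a w)
  | [] => continuous_const
  | i :: w => by
    have hf : Continuous fun s => sigRev x a w s * deriv (fun u => x u i) s :=
      (sigRev_continuous hx w).mul (hx i)
    show Continuous fun t => ∫ s in a..t, sigRev x a w s * deriv (fun u => x u i) s
    exact continuous_iff_continuousAt.2 fun t =>
      ((hf.integral_hasStrictDerivAt a t).hasDerivAt).continuousAt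

lemma sigRev_hasDerivAt (hx : ∀ i : Fin d, Continuous (deriv fun t => x t i))
    (i : Fin d) (w : List (Fin d)) (t : ℝ) :
    HasDerivAt (sigRev x a (i :: w)) (sigRev x a w t * deriv (fun u => x u i) t) t := by
  have hf : Continuous fun s => sigRev x a w s * deriv (fun u => x u i) s :=
    (sigRev_continuous hx w).mul (hx i)
  exact (hf.integral_hasStrictDerivAt a t).hasDerivAt

lemma sigRev_cons_self (i : Fin d) (w : List (Fin d)) : sigRev x a (i :: w) a = 0 := by
  simp [sigRev]

lemma hasDerivAt_list_sum {γ : Type*} (l : List γ) (F : γ → ℝ → ℝ) (F' : γ → ℝ) (t : ℝ)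
    (h : ∀ c ∈ l, HasDerivAt (F c) (F' c) t) :
    HasDerivAt (fun s => (l.map (fun c => F c s)).sum) ((l.map F').sum) t := by
  induction l with
  | nil => simpa using hasDerivAt_const t (0 : ℝ)
  | cons c l ih =>
    simp only [List.map_cons, List.sum_cons]
    exact (h c (by simp)).add (ih fun c hc => h c (by simp [hc]))

lemma sigRev_shuffle (hx : ∀ i : Fin d, Continuous (deriv fun t => x t i)) :
    ∀ (n : ℕ) (p q : List (Fin d)), p.length + q.length ≤ n → ∀ t,
      ((shuffle p q).map (fun w => sigRev x a w t)).sum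
        = sigRev x a p t * sigRev x a q t := by
  intro n
  induction n with
  | zero =>
    intro p q h t
    obtain ⟨hp, hq⟩ : p.length = 0 ∧ q.length = 0 := by omega
    obtain rfl := List.length_eq_zero_iff.mp hp
    obtain rfl := List.length_eq_zero_iff.mp hq
    simp [shuffle_nil_left, sigRev]
  | succ n ih =>
    intro p q h t
    rcases p with _ | ⟨i, p⟩
    · simp [shuffle_nil_left, sigRev]
    rcases q with _ | ⟨j, q⟩
    · simp [shuffle_nil_right, sigRev]
    have hA : ∀ s, ((shuffle p (j :: q)).map (fun w => sigRev x a w s)).sum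
        = sigRev x a p s * sigRev x a (j :: q) s := by
      intro s
      exact ih p (j :: q) (by simp at h ⊢; omega) s
    have hB : ∀ s, ((shuffle (i :: p) q).map (fun w => sigRev x a w s)).sum
        = sigRev x a (i :: p) s * sigRev x a q s := by
      intro s
      exact ih (i :: p) q (by simp at h ⊢; omega) s
    set F : ℝ → ℝ :=
      fun r => ((shuffle (i :: p) (j :: q)).map (fun w => sigRev x a w r)).sum with hFdef
    have hFeq : ∀ r, F r
        = ((shuffle p (j :: q)).map (fun w => sigRev x a (i :: w) r)).sum
          + ((shuffle (i :: p) q).map (fun w => sigRev x a (j :: w) r)).sum := by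
      intro r
      simp [hFdef, shuffle_cons_cons, List.map_map, Function.comp_def]
    have hF : ∀ s, HasDerivAt F
        (sigRev x a p s * sigRev x a (j :: q) s * deriv (fun u => x u i) s
          + sigRev x a (i :: p) s * sigRev x a q s * deriv (fun u => x u j) s) s := by
      intro s
      have h1 := hasDerivAt_list_sum (shuffle p (j :: q))
        (fun w r => sigRev x a (i :: w) r)
        (fun w => sigRev x a w s * deriv (fun u => x u i) s) s
        (fun w _ => sigRev_hasDerivAt hx i w s)
      have h2 := hasDerivAt_list_sum (shuffle (i :: p) q)
        (fun w r => sigRev x a (j :: w) r)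
        (fun w => sigRev x a w s * deriv (fun u => x u j) s) s
        (fun w _ => sigRev_hasDerivAt hx j w s)
      have h12 := h1.add h2
      rw [List.sum_map_mul_right, List.sum_map_mul_right, hA s, hB s] at h12
      have hfun : (fun r => ((shuffle p (j :: q)).map (fun w => sigRev x a (i :: w) r)).sum
          + ((shuffle (i :: p) q).map (fun w => sigRev x a (j :: w) r)).sum) = F :=
        (funext hFeq).symm
      rw [← hfun]; exact h12
    have hG : ∀ s, HasDerivAt (fun r => sigRev x a (i :: p) r * sigRev x a (j :: q) r)
        (sigRev x a p s * deriv (fun u => x u i) s * sigRev x a (j :: q) s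
          + sigRev x a (i :: p) s * (sigRev x a q s * deriv (fun u => x u j) s)) s :=
      fun s => (sigRev_hasDerivAt hx i p s).mul (sigRev_hasDerivAt hx j q s)
    have hFG : ∀ s, HasDerivAt
        (fun r => F r - sigRev x a (i :: p) r * sigRev x a (j :: q) r) 0 s := by
      intro s
      have hsub := (hF s).sub (hG s)
      exact hsub.congr_deriv (by ring)
    have hconst := is_const_of_deriv_eq_zero
      (fun s => (hFG s).differentiableAt) (fun s => (hFG s).deriv) t a
    have hFa : F a = 0 := by
      rw [hFeq]
      simp [sigRev_cons_self]
    have hGa : sigRev x a (i :: p) a * sigRev x a (j :: q) a = 0 := by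
      simp [sigRev_cons_self]
    rw [hFa, hGa, sub_zero] at hconst
    have : F t = sigRev x a (i :: p) t * sigRev x a (j :: q) t := by linarith
    exact this

end Anal

/-- **Shuffle identity.** For a smooth path `x : [0,1] → ℝ^d` and any two words
`u = e_{i_1...i_r}`, `v = e_{j_1...j_s}`, we have
`⟨u ⧢ v, S(x)⟩ = ⟨u, S(x)⟩ ⬝ ⟨v, S(x)⟩`. -/
theorem shuffle_identity {d : ℕ} (x : ℝ → Fin d → ℝ)
    (hx : ∀ i : Fin d, ContDiff ℝ (⊤ : ℕ∞) fun t => x t i)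
    (u v : List (Fin d)) :
    ((shuffle u v).map (sigCoeff x 0 1)).sum = sigCoeff x 0 1 u * sigCoeff x 0 1 v := by
  have hx' : ∀ i : Fin d, Continuous (deriv fun t => x t i) :=
    fun i => (hx i).continuous_deriv (by simp)
  have hperm : ((shuffle u v).map List.reverse).Perm (shuffle u.reverse v.reverse) :=
    Multiset.coe_eq_coe.mp (shuffle_reverse u v)
  calc ((shuffle u v).map (sigCoeff x 0 1)).sum
      = (((shuffle u v).map List.reverse).map (fun w => sigRev x 0 w 1)).sum := by
        rw [List.map_map]; rfl
    _ = ((shuffle u.reverse v.reverse).map (fun w => sigRev x 0 w 1)).sum :=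
        (hperm.map fun w => sigRev x 0 w 1).sum_eq
    _ = sigRev x 0 u.reverse 1 * sigRev x 0 v.reverse 1 :=
        sigRev_shuffle hx' (u.reverse.length + v.reverse.length) _ _ le_rfl 1
    _ = sigCoeff x 0 1 u * sigCoeff x 0 1 v := rfl
end

section
/- Chen's relation: for any two smooth paths x : [0,1] → ℝ^d and y : [0,1] → ℝ^d, the step-n signature of the concatenation x * y equals the tensor product of the individual signatures: S^{≤n}(x * y) = S^{≤n}(x) · S^{≤n}(y). -/
open MeasureTheory intervalIntegral Real Finset

/-- Concatenation of two paths on `[0,1]`: first traverse `x`, then a translate of `y`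
so that the result is continuous. -/
noncomputable def concatPath {d : ℕ} (x y : ℝ → Fin d → ℝ) : ℝ → Fin d → ℝ :=
  fun t i => if t ≤ 1 / 2 then x (2 * t) i else x 1 i - y 0 i + y (2 * t - 1) i

section Aux

variable {d : ℕ} (x y : ℝ → Fin d → ℝ)

lemma sigRev_cons (a : ℝ) (i : Fin d) (w : List (Fin d)) (t : ℝ) :
    sigRev x a (i :: w) t = ∫ s in a..t, sigRev x a w s * deriv (fun u => x u i) s := rfl

lemma ae_ne_half : ∀ᵐ s : ℝ, s ≠ (1 / 2 : ℝ) := by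
  rw [ae_iff]
  simpa [not_not, Set.setOf_eq_eq_singleton] using Real.volume_singleton

lemma concat_hasDerivAt_left (hx : ∀ i : Fin d, ContDiff ℝ (⊤ : ℕ∞) fun t => x t i) (i : Fin d)
    {s : ℝ} (hs : s < 1 / 2) :
    HasDerivAt (fun t => concatPath x y t i) (2 * deriv (fun u => x u i) (2 * s)) s := by
  have hx' : HasDerivAt (fun u => x u i) (deriv (fun u => x u i) (2 * s)) (2 * s) :=
    (((hx i).differentiable (by simp)) (2 * s)).hasDerivAt
  have h2 : HasDerivAt (fun t : ℝ => 2 * t) 2 s := by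
    simpa using (hasDerivAt_id s).const_mul (2 : ℝ)
  have h1 : HasDerivAt (fun t : ℝ => x (2 * t) i) (2 * deriv (fun u => x u i) (2 * s)) s := by
    simpa [Function.comp_def, mul_comm] using hx'.comp s h2
  apply h1.congr_of_eventuallyEq
  filter_upwards [Iio_mem_nhds hs] with t ht
  simp only [concatPath]
  rw [if_pos (Set.mem_Iio.mp ht).le]

lemma concat_hasDerivAt_right (hy : ∀ i : Fin d, ContDiff ℝ (⊤ : ℕ∞) fun t => y t i) (i : Fin d)
    {s : ℝ} (hs : 1 / 2 < s) :
    HasDerivAt (fun t => concatPath x y t i) (2 * deriv (fun u => y u i) (2 * s - 1)) s := by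
  have hy' : HasDerivAt (fun u => y u i) (deriv (fun u => y u i) (2 * s - 1)) (2 * s - 1) :=
    (((hy i).differentiable (by simp)) (2 * s - 1)).hasDerivAt
  have h2 : HasDerivAt (fun t : ℝ => 2 * t - 1) 2 s := by
    simpa using ((hasDerivAt_id s).const_mul (2 : ℝ)).sub_const 1
  have h1 : HasDerivAt (fun t : ℝ => x 1 i - y 0 i + y (2 * t - 1) i)
      (2 * deriv (fun u => y u i) (2 * s - 1)) s := by
    have := (hy'.comp s h2).const_add (x 1 i - y 0 i)
    simpa [Function.comp_def, mul_comm] using this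
  apply h1.congr_of_eventuallyEq
  filter_upwards [Ioi_mem_nhds hs] with t ht
  simp only [concatPath]
  rw [if_neg (not_le.mpr (Set.mem_Ioi.mp ht))]

lemma concat_integrable (hx : ∀ i : Fin d, ContDiff ℝ (⊤ : ℕ∞) fun t => x t i)
    (hy : ∀ i : Fin d, ContDiff ℝ (⊤ : ℕ∞) fun t => y t i) {f : ℝ → ℝ} (hf : Continuous f)
    (i : Fin d) (a b : ℝ) :
    IntervalIntegrable (fun s => f s * deriv (fun t => concatPath x y t i) s) volume a b := by
  have hcx : Continuous (deriv fun u => x u i) := (hx i).continuous_deriv (by simp)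
  have hcy : Continuous (deriv fun u => y u i) := (hy i).continuous_deriv (by simp)
  have hg : IntervalIntegrable
      (fun s => |f s| * (|2 * deriv (fun u => x u i) (2 * s)| +
        |2 * deriv (fun u => y u i) (2 * s - 1)|)) volume a b := by
    apply Continuous.intervalIntegrable
    apply hf.abs.mul
    apply Continuous.add
    · exact (continuous_const.mul (hcx.comp (continuous_const.mul continuous_id))).abs
    · exact (continuous_const.mul (hcy.comp ((continuous_const.mul continuous_id).sub
        continuous_const))).abs
  refine hg.mono_fun' ?_ ?_
  · exact ((hf.measurable.mul (measurable_deriv _)).aestronglyMeasurable).restrict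
  · filter_upwards [(ae_ne_half.filter_mono (ae_mono Measure.restrict_le_self))] with s hs
    rcases lt_or_gt_of_ne hs with h | h
    · rw [Real.norm_eq_abs, abs_mul, (concat_hasDerivAt_left x y hx i h).deriv]
      exact mul_le_mul_of_nonneg_left (le_add_of_nonneg_right (abs_nonneg _)) (abs_nonneg _)
    · rw [Real.norm_eq_abs, abs_mul, (concat_hasDerivAt_right x y hy i h).deriv]
      exact mul_le_mul_of_nonneg_left (le_add_of_nonneg_left (abs_nonneg _)) (abs_nonneg _)

lemma sigRev_concat_continuous (hx : ∀ i : Fin d, ContDiff ℝ (⊤ : ℕ∞) fun t => x t i)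
    (hy : ∀ i : Fin d, ContDiff ℝ (⊤ : ℕ∞) fun t => y t i) (w : List (Fin d)) :
    Continuous (sigRev (concatPath x y) 0 w) := by
  induction w with
  | nil => exact continuous_const
  | cons i w ih =>
      exact intervalIntegral.continuous_primitive
        (fun a b => concat_integrable x y hx hy ih i a b) 0

lemma sigRev_smooth_continuous (hy : ∀ i : Fin d, ContDiff ℝ (⊤ : ℕ∞) fun t => y t i)
    (a : ℝ) (w : List (Fin d)) : Continuous (sigRev y a w) := by
  induction w with
  | nil => exact continuous_const
  | cons i w ih =>
      exact intervalIntegral.continuous_primitive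
        (fun c b => ((ih.mul ((hy i).continuous_deriv (by simp))).intervalIntegrable c b)) a

lemma sigRev_concat_left (hx : ∀ i : Fin d, ContDiff ℝ (⊤ : ℕ∞) fun t => x t i)
    (w : List (Fin d)) : ∀ t : ℝ, t ≤ 1 / 2 →
    sigRev (concatPath x y) 0 w t = sigRev x 0 w (2 * t) := by
  induction w with
  | nil => intro t _; rfl
  | cons i w ih =>
      intro t ht
      show (∫ s in (0:ℝ)..t, sigRev (concatPath x y) 0 w s *
          deriv (fun u => concatPath x y u i) s) = _
      have hcongr : (∫ s in (0:ℝ)..t, sigRev (concatPath x y) 0 w s *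
          deriv (fun u => concatPath x y u i) s) =
          ∫ s in (0:ℝ)..t, 2 * (sigRev x 0 w (2 * s) * deriv (fun u => x u i) (2 * s)) := by
        apply intervalIntegral.integral_congr_ae
        filter_upwards [ae_ne_half] with s hs hmem
        have hs2 : s < 1 / 2 := by
          rcases Set.mem_uIoc.mp hmem with h | h
          · exact lt_of_le_of_ne (h.2.trans ht) hs
          · exact lt_of_le_of_lt h.2 (by norm_num)
        rw [ih s hs2.le, (concat_hasDerivAt_left x y hx i hs2).deriv]
        ring
      rw [hcongr, intervalIntegral.integral_const_mul]
      have := intervalIntegral.smul_integral_comp_mul_left (a := (0:ℝ)) (b := t)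
        (fun u => sigRev x 0 w u * deriv (fun u' => x u' i) u) 2
      simp only [smul_eq_mul, mul_zero] at this
      rw [this]
      rfl

lemma chen_key (hx : ∀ i : Fin d, ContDiff ℝ (⊤ : ℕ∞) fun t => x t i)
    (hy : ∀ i : Fin d, ContDiff ℝ (⊤ : ℕ∞) fun t => y t i) :
    ∀ (v : List (Fin d)) (t : ℝ), 1 / 2 ≤ t → t ≤ 1 →
    sigRev (concatPath x y) 0 v t =
      ∑ j ∈ Finset.range (v.length + 1),
        sigRev x 0 (v.drop j) 1 * sigRev y 0 (v.take j) (2 * t - 1) := by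
  intro v
  induction v with
  | nil => intro t _ _; simp [sigRev]
  | cons i v ih =>
      intro t ht1 ht2
      have hcy : Continuous (deriv fun u => y u i) := (hy i).continuous_deriv (by simp)
      have hzc := sigRev_concat_continuous x y hx hy v
      have hInt1 : IntervalIntegrable (fun s => sigRev (concatPath x y) 0 v s *
          deriv (fun u => concatPath x y u i) s) volume 0 (1/2) :=
        concat_integrable x y hx hy hzc i 0 (1/2)
      have hInt2 : IntervalIntegrable (fun s => sigRev (concatPath x y) 0 v s *
          deriv (fun u => concatPath x y u i) s) volume (1/2) t :=
        concat_integrable x y hx hy hzc i (1/2) t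
      have hsplit : sigRev (concatPath x y) 0 (i :: v) t =
          sigRev (concatPath x y) 0 (i :: v) (1/2) +
          ∫ s in (1/2:ℝ)..t, sigRev (concatPath x y) 0 v s *
            deriv (fun u => concatPath x y u i) s := by
        rw [sigRev_cons, sigRev_cons,
          intervalIntegral.integral_add_adjacent_intervals hInt1 hInt2]
      have hhalf : sigRev (concatPath x y) 0 (i :: v) (1/2) = sigRev x 0 (i :: v) 1 := by
        have := sigRev_concat_left x y hx (i :: v) (1/2) le_rfl
        norm_num at this
        exact this
      have hcongr : (∫ s in (1/2:ℝ)..t, sigRev (concatPath x y) 0 v s *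
            deriv (fun u => concatPath x y u i) s) =
          ∫ s in (1/2:ℝ)..t, ∑ j ∈ Finset.range (v.length + 1),
            sigRev x 0 (v.drop j) 1 *
              (2 * ((fun u => sigRev y 0 (v.take j) u * deriv (fun u' => y u' i) u)
                (2 * s + -1))) := by
        apply intervalIntegral.integral_congr_ae
        filter_upwards [ae_ne_half] with s hs hmem
        have hs1 : 1/2 < s ∧ s ≤ t := by
          rcases Set.mem_uIoc.mp hmem with h | h
          · exact ⟨h.1, h.2⟩
          · exact absurd (h.1.trans_le (h.2.trans ht1)) (lt_irrefl t)
        rw [ih s hs1.1.le (hs1.2.trans ht2), (concat_hasDerivAt_right x y hy i hs1.1).deriv,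
          Finset.sum_mul]
        refine Finset.sum_congr rfl fun j _ => ?_
        have harg : 2 * s + -1 = 2 * s - 1 := by ring
        simp only [harg]
        ring
      rw [hsplit, hhalf, hcongr, intervalIntegral.integral_finset_sum]
      · have hterm : ∀ j ∈ Finset.range (v.length + 1),
            (∫ s in (1/2:ℝ)..t, sigRev x 0 (v.drop j) 1 *
              (2 * ((fun u => sigRev y 0 (v.take j) u * deriv (fun u' => y u' i) u)
                (2 * s + -1)))) =
            sigRev x 0 (v.drop j) 1 * sigRev y 0 (i :: v.take j) (2 * t - 1) := by
          intro j _
          rw [intervalIntegral.integral_const_mul, intervalIntegral.integral_const_mul]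
          have hcv := intervalIntegral.smul_integral_comp_mul_add (a := (1/2:ℝ)) (b := t)
            (fun u => sigRev y 0 (v.take j) u * deriv (fun u' => y u' i) u) 2 (-1)
          simp only [smul_eq_mul] at hcv
          have hb1 : (2:ℝ) * (1/2) + -1 = 0 := by norm_num
          have hb2 : (2:ℝ) * t + -1 = 2 * t - 1 := by ring
          rw [hb1, hb2] at hcv
          rw [hcv, sigRev_cons]
        rw [Finset.sum_congr rfl hterm]
        simp only [List.length_cons]
        rw [Finset.sum_range_succ' (fun j => sigRev x 0 (List.drop j (i :: v)) 1 *
            sigRev y 0 (List.take j (i :: v)) (2 * t - 1)) (v.length + 1)]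
        simp only [List.drop_succ_cons, List.take_succ_cons, List.drop_zero, List.take_zero]
        have h1 : sigRev y 0 ([] : List (Fin d)) (2 * t - 1) = 1 := rfl
        rw [h1, mul_one]
        ring
      · intro j _
        apply Continuous.intervalIntegrable
        apply continuous_const.mul
        apply continuous_const.mul
        exact ((sigRev_smooth_continuous y hy 0 (v.take j)).mul hcy).comp
          ((continuous_const.mul continuous_id).add continuous_const)

end Aux

/-- **Chen's relation.** For smooth paths `x, y : [0,1] → ℝ^d`, the step-n signature of the
concatenation `x * y` is the (truncated) tensor product of the two signatures: for every
word `w`, the coefficient of `w` in `S(x*y)` is `Σ_{k} ⟨w₁, S(x)⟩⟨w₂, S(y)⟩` over all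
splittings `w = w₁ ++ w₂`. -/
theorem chen_relation {d : ℕ} (x y : ℝ → Fin d → ℝ)
    (hx : ∀ i : Fin d, ContDiff ℝ (⊤ : ℕ∞) fun t => x t i)
    (hy : ∀ i : Fin d, ContDiff ℝ (⊤ : ℕ∞) fun t => y t i)
    (w : List (Fin d)) :
    sigCoeff (concatPath x y) 0 1 w =
      ∑ k ∈ Finset.range (w.length + 1),
        sigCoeff x 0 1 (w.take k) * sigCoeff y 0 1 (w.drop k) := by
  have key := chen_key x y hx hy w.reverse 1 (by norm_num) le_rfl
  have h21 : (2:ℝ) * 1 - 1 = 1 := by norm_num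
  rw [h21] at key
  show sigRev (concatPath x y) 0 w.reverse 1 = _
  rw [key, List.length_reverse,
    ← Finset.sum_range_reflect
      (fun k => sigCoeff x 0 1 (w.take k) * sigCoeff y 0 1 (w.drop k)) (w.length + 1)]
  refine Finset.sum_congr rfl fun j hj => ?_
  have hj' : j ≤ w.length := Nat.lt_succ_iff.mp (Finset.mem_range.mp hj)
  have e1 : w.length + 1 - 1 - j = w.length - j := by omega
  rw [e1]
  show sigRev x 0 (w.reverse.drop j) 1 * sigRev y 0 (w.reverse.take j) 1 =
    sigRev x 0 (w.take (w.length - j)).reverse 1 * sigRev y 0 (w.drop (w.length - j)).reverse 1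
  rw [List.reverse_take, List.reverse_drop]
  have e2 : w.length - (w.length - j) = j := by omega
  rw [e2]
end
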